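/- arXiv:2605.17422 — 6 statements merged into one kernel-verified Lean document; each statement's English description precedes it below -/
import Mathlib

section
/- Let p₁ ≥ 1 and C_f > 0, and let f : ℝ → ℝ be C¹ with f'(a+s) − f'(a) ≥ C_f s^{p₁} for all a ∈ ℝ and s > 0. Let t > 0, E > 0, and let v : ℝ → ℝ be a function in L²(ℝ) with ‖v‖_{L²(ℝ)} ≤ E which satisfies the Oleinik-type estimate f'(v(y)) − f'(v(x)) ≤ (y−x)/t for all x < y. Then v ∈ L∞(ℝ) with ‖v‖_{L∞(ℝ)} ≤ 4·(E²/(C_f t))^{1/(p₁+2)}. -/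
open MeasureTheory Set
open scoped ENNReal

/-!
Write `d = f'`. Uniform convexity of `f` and the Oleinik estimate give `C t (v y - v x)^p ≤ y - x`
whenever `x < y` and `v x < v y`: `v` can only increase slowly. So if `|v x₀| = m > 0`, then
`|v| ≥ m / 2` on an interval of length `C t (m / 2)^p` ending at `x₀` (if `v x₀ > 0`) or starting
at `x₀` (if `v x₀ < 0`), and Chebyshev's inequality gives `(m / 2)^2 · C t (m / 2)^p ≤ ‖v‖₂² ≤ E²`,
that is `m ≤ 2 (E² / (C t))^{1/(p+2)}`.
-/

theorem ofReal_pow_mul_measure_le_eLpNorm_pow {α F : Type*} [MeasurableSpace α]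
    [NormedAddCommGroup F] {μ : Measure α} {p : ℝ≥0∞} (hp0 : p ≠ 0) (hptop : p ≠ ∞)
    {f : α → F} (hf : AEStronglyMeasurable f μ) {s : Set α} {c : ℝ}
    (hc : ∀ x ∈ s, c ≤ ‖f x‖) :
    ENNReal.ofReal c ^ p.toReal * μ s ≤ eLpNorm f p μ ^ p.toReal := by
  refine le_trans ?_ (mul_meas_ge_le_pow_eLpNorm' μ hp0 hptop hf (ENNReal.ofReal c))
  gcongr
  intro x hx
  rw [mem_ofPred_eq, ← ofReal_norm]
  exact ENNReal.ofReal_le_ofReal (hc x hx)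

theorem sq_mul_sub_le_of_le_abs_on_Ioo {v : ℝ → ℝ} {E c a b : ℝ}
    (hv : AEStronglyMeasurable v volume) (hvE : eLpNorm v 2 volume ≤ ENNReal.ofReal E)
    (hc0 : 0 ≤ c) (hc : ∀ y ∈ Ioo a b, c ≤ |v y|) :
    c ^ 2 * (b - a) ≤ E ^ 2 := by
  have hcheb := ofReal_pow_mul_measure_le_eLpNorm_pow two_ne_zero ENNReal.ofNat_ne_top hv hc
  simp only [ENNReal.toReal_ofNat, ENNReal.rpow_two, Real.volume_Ioo] at hcheb
  rw [← ENNReal.ofReal_le_ofReal_iff (sq_nonneg E), ENNReal.ofReal_mul (sq_nonneg c),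
    ENNReal.ofReal_pow hc0, ← sq_abs E, ENNReal.ofReal_pow (abs_nonneg E)]
  calc ENNReal.ofReal c ^ 2 * ENNReal.ofReal (b - a) ≤ eLpNorm v 2 volume ^ 2 := hcheb
    _ ≤ ENNReal.ofReal |E| ^ 2 := by
      gcongr
      exact hvE.trans (ENNReal.ofReal_le_ofReal (le_abs_self E))

section Oleinik

variable {d v : ℝ → ℝ} {C p t : ℝ}

theorem mul_rpow_sub_le_sub_of_oleinik (hd : ∀ a s : ℝ, 0 < s → C * s ^ p ≤ d (a + s) - d a)
    (ht : 0 < t) (hO : ∀ x y : ℝ, x < y → d (v y) - d (v x) ≤ (y - x) / t)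
    {x y : ℝ} (hxy : x < y) (hv : v x < v y) :
    C * t * (v y - v x) ^ p ≤ y - x := by
  have hconvex := hd (v x) (v y - v x) (sub_pos.2 hv)
  rw [add_sub_cancel] at hconvex
  calc C * t * (v y - v x) ^ p = t * (C * (v y - v x) ^ p) := by ring
    _ ≤ t * ((y - x) / t) := by gcongr; exact hconvex.trans (hO x y hxy)
    _ = y - x := mul_div_cancel₀ _ ht.ne'

theorem le_of_mem_Ioo_left_of_oleinik (hd : ∀ a s : ℝ, 0 < s → C * s ^ p ≤ d (a + s) - d a)
    (hC : 0 ≤ C) (hp : 0 ≤ p) (ht : 0 < t)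
    (hO : ∀ x y : ℝ, x < y → d (v y) - d (v x) ≤ (y - x) / t) {x₀ y c : ℝ} (hc : c < v x₀)
    (hy : y ∈ Ioo (x₀ - C * t * (v x₀ - c) ^ p) x₀) :
    c ≤ v y := by
  by_contra! hvy
  have hslow := mul_rpow_sub_le_sub_of_oleinik hd ht hO hy.2 (hvy.trans hc)
  have hmono : C * t * (v x₀ - c) ^ p ≤ C * t * (v x₀ - v y) ^ p := by gcongr
  linarith [hy.1]

theorem le_of_mem_Ioo_right_of_oleinik (hd : ∀ a s : ℝ, 0 < s → C * s ^ p ≤ d (a + s) - d a)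
    (hC : 0 ≤ C) (hp : 0 ≤ p) (ht : 0 < t)
    (hO : ∀ x y : ℝ, x < y → d (v y) - d (v x) ≤ (y - x) / t) {x₀ y c : ℝ} (hc : v x₀ < c)
    (hy : y ∈ Ioo x₀ (x₀ + C * t * (c - v x₀) ^ p)) :
    v y ≤ c := by
  by_contra! hvy
  have hslow := mul_rpow_sub_le_sub_of_oleinik hd ht hO hy.1 (hc.trans hvy)
  have hmono : C * t * (c - v x₀) ^ p ≤ C * t * (v y - v x₀) ^ p := by gcongr
  linarith [hy.2]

theorem exists_Ioo_le_abs_of_oleinik (hd : ∀ a s : ℝ, 0 < s → C * s ^ p ≤ d (a + s) - d a)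
    (hC : 0 ≤ C) (hp : 0 ≤ p) (ht : 0 < t)
    (hO : ∀ x y : ℝ, x < y → d (v y) - d (v x) ≤ (y - x) / t) {x₀ c : ℝ} (hc : c < |v x₀|) :
    ∃ a b : ℝ, b - a = C * t * (|v x₀| - c) ^ p ∧ ∀ y ∈ Ioo a b, c ≤ |v y| := by
  rcases le_or_gt 0 (v x₀) with hpos | hneg
  · rw [abs_of_nonneg hpos] at hc ⊢
    exact ⟨_, x₀, by ring, fun y hy ↦
      (le_of_mem_Ioo_left_of_oleinik hd hC hp ht hO hc hy).trans (le_abs_self _)⟩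
  · rw [abs_of_neg hneg, neg_sub_comm]
    rw [abs_of_neg hneg, lt_neg] at hc
    exact ⟨x₀, _, by ring, fun y hy ↦
      (le_neg.1 (le_of_mem_Ioo_right_of_oleinik hd hC hp ht hO hc hy)).trans (neg_le_abs _)⟩

theorem abs_le_of_oleinik_of_eLpNorm_le (hd : ∀ a s : ℝ, 0 < s → C * s ^ p ≤ d (a + s) - d a)
    (hC : 0 < C) (hp : 0 ≤ p) (ht : 0 < t)
    (hO : ∀ x y : ℝ, x < y → d (v y) - d (v x) ≤ (y - x) / t) {E : ℝ}
    (hv : AEStronglyMeasurable v volume) (hvE : eLpNorm v 2 volume ≤ ENNReal.ofReal E) (x : ℝ) :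
    |v x| ≤ 2 * (E ^ 2 / (C * t)) ^ (1 / (p + 2)) := by
  rcases (abs_nonneg (v x)).eq_or_lt with hm0 | hm
  · rw [← hm0]; positivity
  obtain ⟨a, b, hab, hbig⟩ := exists_Ioo_le_abs_of_oleinik hd hC.le hp ht hO (half_lt_self hm)
  have hcheb := sq_mul_sub_le_of_le_abs_on_Ioo hv hvE (by positivity) hbig
  rw [hab, sub_half] at hcheb
  have hpow : (|v x| / 2) ^ (p + 2) ≤ E ^ 2 / (C * t) := by
    rw [le_div_iff₀ (by positivity), Real.rpow_add (by positivity), Real.rpow_two]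
    linarith
  have hhalf : |v x| / 2 ≤ (E ^ 2 / (C * t)) ^ (1 / (p + 2)) := by
    rw [one_div, Real.le_rpow_inv_iff_of_pos (by positivity) (by positivity) (by linarith)]
    exact hpow
  linarith

end Oleinik

theorem linf_decay_from_oleinik_L2_general
    (p₁ C_f t E : ℝ) (f v : ℝ → ℝ)
    (hp₁ : 1 ≤ p₁) (hCf : 0 < C_f) (ht : 0 < t)
    (hincr : ∀ a s : ℝ, 0 < s → C_f * s ^ p₁ ≤ deriv f (a + s) - deriv f a)
    (hv2 : MemLp v 2 volume)
    (hvE : eLpNorm v 2 volume ≤ ENNReal.ofReal E)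
    (hOleinik : ∀ x y : ℝ, x < y → deriv f (v y) - deriv f (v x) ≤ (y - x) / t) :
    MemLp v ⊤ volume ∧
      eLpNorm v ⊤ volume ≤ ENNReal.ofReal (4 * (E ^ 2 / (C_f * t)) ^ (1 / (p₁ + 2))) := by
  have hbound : ∀ᵐ x ∂volume, ‖v x‖ ≤ 4 * (E ^ 2 / (C_f * t)) ^ (1 / (p₁ + 2)) := by
    refine ae_of_all _ fun x ↦ ?_
    rw [Real.norm_eq_abs]
    refine (abs_le_of_oleinik_of_eLpNorm_le hincr hCf (by linarith) ht hOleinik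
      hv2.aestronglyMeasurable hvE x).trans ?_
    have hK : 0 ≤ (E ^ 2 / (C_f * t)) ^ (1 / (p₁ + 2)) := by positivity
    linarith
  refine ⟨memLp_top_of_bound hv2.aestronglyMeasurable _ hbound, ?_⟩
  rw [eLpNorm_exponent_top]
  exact eLpNormEssSup_le_of_ae_bound hbound

/-- **`L∞` decay from the Oleinik estimate, `L²` data** (Lemma 2.2, first part).
If `f` is `C¹` with `f'(a+s) - f'(a) ≥ C_f s^{p₁}` for all `a ∈ ℝ`, `s > 0`, and
`v ∈ L²(ℝ)` satisfies `‖v‖_{L²} ≤ E` together with the Oleinik-type estimate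
`f'(v(y)) - f'(v(x)) ≤ (y-x)/t` for all `x < y`, then `v ∈ L∞(ℝ)` with
`‖v‖_{L∞} ≤ 4 (E²/(C_f t))^{1/(p₁+2)}`. -/
theorem linf_decay_from_oleinik_L2
    (p₁ C_f t E : ℝ) (f v : ℝ → ℝ)
    (hp₁ : 1 ≤ p₁) (hCf : 0 < C_f) (ht : 0 < t) (hE : 0 < E)
    (hf : ContDiff ℝ 1 f)
    (hincr : ∀ a s : ℝ, 0 < s → C_f * s ^ p₁ ≤ deriv f (a + s) - deriv f a)
    (hv2 : MemLp v 2 volume)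
    (hvE : eLpNorm v 2 volume ≤ ENNReal.ofReal E)
    (hOleinik : ∀ x y : ℝ, x < y → deriv f (v y) - deriv f (v x) ≤ (y - x) / t) :
    MemLp v ⊤ volume ∧
      eLpNorm v ⊤ volume ≤ ENNReal.ofReal (4 * (E ^ 2 / (C_f * t)) ^ (1 / (p₁ + 2))) :=
  linf_decay_from_oleinik_L2_general p₁ C_f t E f v hp₁ hCf ht hincr hv2 hvE hOleinik
end

section
/- Let p₁ ≥ 1, C_f > 0, M > 0 and t > 0, and let f : ℝ → ℝ be C¹ with f'(a+s) − f'(a) ≥ C_f s^{p₁} for all a ∈ ℝ and s > 0. Let v : ℝ → ℝ satisfy: (i) ‖v‖_{L∞(ℝ)} ≤ M; (ii) the Oleinik-type estimate f'(v(y)) − f'(v(x)) ≤ (y−x)/t for all x < y; and (iii) the map x ↦ x − t·f'(v(x)) is nondecreasing on ℝ (no crossing of backward characteristic lines). Then for every −∞ < a < b < +∞, v ∈ BV^{1/p₁}([a,b]) with TV^{1/p₁}{v;[a,b]} ≤ (2/C_f)·((b−a)/t + sup_{|s|≤M}|f'(s)|). -/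
/-! The Oleinik estimate writes `g := f' ∘ v` as the difference of the nondecreasing functions
`x ↦ x / t` and `x ↦ x / t - g x`, so along any partition of `[a,b]` the increments of `g` have
total absolute value at most `2 (b - a) / t - (g b - g a) ≤ 2 ((b - a) / t + sup_{[-M,M]} |f'|)`.
The growth condition on `f'` gives `C_f |v y - v x| ^ p₁ ≤ |g y - g x|`, which transfers this
bound to the fractional variation of `v`. -/

open MeasureTheory
open scoped ENNReal

noncomputable section

/-- The fractional `γ`-total variation of `g` on `[a,b]`:
`sup` over partitions `a = x₀ ≤ x₁ ≤ ⋯ ≤ x_N = b` of `∑ |g(xᵢ) - g(xᵢ₋₁)|^{1/γ}`. -/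
def fracTV (g : ℝ → ℝ) (a b γ : ℝ) : ℝ≥0∞ :=
  ⨆ (n : ℕ) (x : Fin (n + 1) → ℝ)
    (_ : Monotone x ∧ x 0 = a ∧ x (Fin.last n) = b),
    ∑ i : Fin n, ENNReal.ofReal (|g (x i.succ) - g (x i.castSucc)| ^ (1 / γ))

theorem Fin.sum_succ_sub_castSucc {n : ℕ} (u : Fin (n + 1) → ℝ) :
    ∑ i : Fin n, (u i.succ - u i.castSucc) = u (Fin.last n) - u 0 := by
  rw [Finset.sum_sub_distrib]
  linarith [Fin.sum_univ_succ u, Fin.sum_univ_castSucc u]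

section Growth

variable {φ : ℝ → ℝ} {C p : ℝ}

theorem mul_abs_sub_rpow_le_abs_sub (hp : 0 < p)
    (hφ : ∀ a s : ℝ, 0 < s → C * s ^ p ≤ φ (a + s) - φ a) (u w : ℝ) :
    C * |u - w| ^ p ≤ |φ u - φ w| := by
  rcases lt_trichotomy u w with h | rfl | h
  · have := hφ u (w - u) (sub_pos.mpr h)
    rw [add_sub_cancel, ← abs_of_pos (sub_pos.mpr h), abs_sub_comm] at this
    exact this.trans (abs_sub_comm (φ w) (φ u) ▸ le_abs_self _)
  · simp [Real.zero_rpow hp.ne']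
  · have := hφ w (u - w) (sub_pos.mpr h)
    rw [add_sub_cancel, ← abs_of_pos (sub_pos.mpr h)] at this
    exact this.trans (le_abs_self _)

theorem monotone_of_mul_rpow_le_sub (hC : 0 ≤ C)
    (hφ : ∀ a s : ℝ, 0 < s → C * s ^ p ≤ φ (a + s) - φ a) : Monotone φ := by
  intro x y hxy
  rcases hxy.eq_or_lt with rfl | h
  · rfl
  · have := hφ x (y - x) (sub_pos.mpr h)
    rw [add_sub_cancel] at this
    linarith [mul_nonneg hC (Real.rpow_nonneg (sub_pos.mpr h).le p)]

end Growth

theorem Monotone.abs_le_csSup_abs_image_Icc {φ : ℝ → ℝ} (hφ : Monotone φ) {a b s : ℝ}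
    (hs : s ∈ Set.Icc a b) : |φ s| ≤ sSup ((fun s => |φ s|) '' Set.Icc a b) := by
  refine le_csSup ⟨max |φ a| |φ b|, ?_⟩ ⟨s, hs, rfl⟩
  rintro _ ⟨r, hr, rfl⟩
  exact abs_le_max_abs_abs (hφ hr.1) (hφ hr.2)

theorem sum_abs_sub_le_of_monotone_sub {g h : ℝ → ℝ} (hh : Monotone h)
    (hhg : Monotone fun x => h x - g x) {n : ℕ} {x : Fin (n + 1) → ℝ} (hx : Monotone x) :
    ∑ i : Fin n, |g (x i.succ) - g (x i.castSucc)| ≤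
      2 * (h (x (Fin.last n)) - h (x 0)) - (g (x (Fin.last n)) - g (x 0)) := by
  have step : ∀ y z, y ≤ z → |g z - g y| ≤ 2 * (h z - h y) - (g z - g y) := fun y z hyz => by
    have := hh hyz
    have := hhg hyz
    rw [abs_le]
    constructor <;> linarith
  calc ∑ i : Fin n, |g (x i.succ) - g (x i.castSucc)|
      ≤ ∑ i : Fin n, (2 * (h (x i.succ) - h (x i.castSucc)) - (g (x i.succ) - g (x i.castSucc))) :=
        Finset.sum_le_sum fun i _ => step _ _ (hx Fin.castSucc_lt_succ.le)
    _ = 2 * (h (x (Fin.last n)) - h (x 0)) - (g (x (Fin.last n)) - g (x 0)) := by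
        rw [Finset.sum_sub_distrib, ← Finset.mul_sum]
        exact congrArg₂ (fun H G => 2 * H - G) (Fin.sum_succ_sub_castSucc (h ∘ x))
          (Fin.sum_succ_sub_castSucc (g ∘ x))

theorem fracTV_one_div_le {v g : ℝ → ℝ} {a b p C B : ℝ} (hC : 0 < C)
    (hvg : ∀ x y, C * |v y - v x| ^ p ≤ |g y - g x|)
    (hg : ∀ (n : ℕ) (x : Fin (n + 1) → ℝ), Monotone x → x 0 = a → x (Fin.last n) = b →
      ∑ i : Fin n, |g (x i.succ) - g (x i.castSucc)| ≤ B) :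
    fracTV v a b (1 / p) ≤ ENNReal.ofReal (B / C) := by
  refine iSup_le fun n => iSup_le fun x => iSup_le fun ⟨hx, hx0, hxl⟩ => ?_
  rw [one_div_one_div]
  calc ∑ i : Fin n, ENNReal.ofReal (|v (x i.succ) - v (x i.castSucc)| ^ p)
      ≤ ∑ i : Fin n, ENNReal.ofReal (|g (x i.succ) - g (x i.castSucc)| / C) :=
        Finset.sum_le_sum fun i _ => ENNReal.ofReal_le_ofReal ((le_div_iff₀' hC).mpr (hvg _ _))
    _ = ENNReal.ofReal (∑ i : Fin n, |g (x i.succ) - g (x i.castSucc)| / C) :=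
        (ENNReal.ofReal_sum_of_nonneg fun i _ => by positivity).symm
    _ ≤ ENNReal.ofReal (B / C) := by
        rw [← Finset.sum_div]
        exact ENNReal.ofReal_le_ofReal (div_le_div_of_nonneg_right (hg n x hx hx0 hxl) hC.le)

theorem fracBV_from_oleinik_general
    (p₁ C_f M t : ℝ) (f v : ℝ → ℝ)
    (hp₁ : 1 ≤ p₁) (hCf : 0 < C_f) (ht : 0 < t)
    (hincr : ∀ a s : ℝ, 0 < s → C_f * s ^ p₁ ≤ deriv f (a + s) - deriv f a)
    (hbd : ∀ x : ℝ, |v x| ≤ M)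
    (hOleinik : ∀ x y : ℝ, x < y → deriv f (v y) - deriv f (v x) ≤ (y - x) / t) :
    ∀ a b : ℝ, a < b →
      fracTV v a b (1 / p₁) ≤
        ENNReal.ofReal
          ((2 / C_f) * ((b - a) / t + sSup ((fun s => |deriv f s|) '' Set.Icc (-M) M))) := by
  intro a b _
  set g : ℝ → ℝ := fun x => deriv f (v x)
  set S := sSup ((fun s => |deriv f s|) '' Set.Icc (-M) M)
  have hgS : ∀ x, |g x| ≤ S := fun x =>
    (monotone_of_mul_rpow_le_sub hCf.le hincr).abs_le_csSup_abs_image_Icc (abs_le.mp (hbd x))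
  have hOleinik_mono : Monotone fun x => x / t - g x := fun x y hxy => by
    rcases hxy.eq_or_lt with rfl | h
    · rfl
    · linarith [hOleinik x y h, sub_div y x t]
  rw [div_mul_eq_mul_div]
  refine fracTV_one_div_le (g := g) hCf
    (fun x y => mul_abs_sub_rpow_le_abs_sub (by linarith) hincr _ _) fun n x hx hx0 hxl => ?_
  have hsum := sum_abs_sub_le_of_monotone_sub (monotone_id.div_const ht.le) hOleinik_mono hx
  rw [hx0, hxl, id, id] at hsum
  linarith [abs_le.mp (hgS a), abs_le.mp (hgS b), sub_div b a t]

/-- **Fractional BV regularity from the Oleinik estimate** (Lemma 2.2, second part).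
If `f` is `C¹` with `f'(a+s) - f'(a) ≥ C_f s^{p₁}`, and `v` is bounded by `M`, satisfies
the Oleinik-type estimate `f'(v(y)) - f'(v(x)) ≤ (y-x)/t` for `x < y`, and the backward
characteristic map `x ↦ x - t f'(v(x))` is nondecreasing, then for every `a < b` one has
`v ∈ BV^{1/p₁}([a,b])` with
`TV^{1/p₁}{v;[a,b]} ≤ (2/C_f)((b-a)/t + sup_{|s|≤M} |f'(s)|)`. -/
theorem fracBV_from_oleinik
    (p₁ C_f M t : ℝ) (f v : ℝ → ℝ)
    (hp₁ : 1 ≤ p₁) (hCf : 0 < C_f) (hM : 0 < M) (ht : 0 < t)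
    (hf : ContDiff ℝ 1 f)
    (hincr : ∀ a s : ℝ, 0 < s → C_f * s ^ p₁ ≤ deriv f (a + s) - deriv f a)
    (hbd : ∀ x : ℝ, |v x| ≤ M)
    (hOleinik : ∀ x y : ℝ, x < y → deriv f (v y) - deriv f (v x) ≤ (y - x) / t)
    (hchar : Monotone fun x : ℝ => x - t * deriv f (v x)) :
    ∀ a b : ℝ, a < b →
      fracTV v a b (1 / p₁) ≤
        ENNReal.ofReal
          ((2 / C_f) * ((b - a) / t + sSup ((fun s => |deriv f s|) '' Set.Icc (-M) M))) :=
  fracBV_from_oleinik_general p₁ C_f M t f v hp₁ hCf ht hincr hbd hOleinik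

end
end

section
/- Let p₁ ≥ 1 and C_f > 0, and let f : ℝ → ℝ be C¹ with f'(a+s) − f'(a) ≥ C_f s^{p₁} for all a ∈ ℝ and s > 0. Let t > 0, E > 0, and let v : ℝ → ℝ be a function in L¹(ℝ) with ‖v‖_{L¹(ℝ)} ≤ E which satisfies the Oleinik-type estimate f'(v(y)) − f'(v(x)) ≤ (y−x)/t for all x < y. Then v ∈ L∞(ℝ) with ‖v‖_{L∞(ℝ)} ≤ 4·(E/(C_f t))^{1/(p₁+1)}. -/
open MeasureTheory Set
open scoped ENNReal

/-!
By the Oleinik estimate `f' ∘ v` grows by less than `C_f s^{p₁}` on any interval shorter than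
`C_f t s^{p₁}`, while by the growth condition on `f'` it would grow by at least that much wherever
`v` increases by `s`. Hence a point where `|v| ≥ 2s` forces `|v| ≥ s` on an interval of length
`C_f t s^{p₁}`, and integrating gives `C_f t s^{p₁+1} ≤ ‖v‖_{L¹} ≤ E`. So `v` is bounded everywhere
by `2 (E/(C_f t))^{1/(p₁+1)}`.
-/

theorem mul_le_integral_norm_of_le_norm_on_Ioo {E : Type*} [NormedAddCommGroup E] {f : ℝ → E}
    (hf : Integrable f) {a r s : ℝ} (hr : 0 ≤ r) (hfs : ∀ x ∈ Ioo a (a + r), s ≤ ‖f x‖) :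
    s * r ≤ ∫ x, ‖f x‖ := calc
  s * r = s * volume.real (Ioo a (a + r)) := by simp [hr]
  _ ≤ ∫ x in Ioo a (a + r), ‖f x‖ :=
    setIntegral_ge_of_const_le_real measurableSet_Ioo measure_Ioo_lt_top.ne hfs hf.norm.integrableOn
  _ ≤ ∫ x, ‖f x‖ := setIntegral_le_integral hf.norm (.of_forall fun _ => norm_nonneg _)

theorem integral_norm_le_of_eLpNorm_one_le {α E : Type*} [MeasurableSpace α] {μ : Measure α}
    [NormedAddCommGroup E] {f : α → E} (hf : Integrable f μ) {C : ℝ} (hC : 0 ≤ C)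
    (hfC : eLpNorm f 1 μ ≤ ENNReal.ofReal C) : ∫ x, ‖f x‖ ∂μ ≤ C := by
  rwa [eLpNorm_one_eq_lintegral_enorm, ← ofReal_integral_norm_eq_lintegral_enorm hf,
    ENNReal.ofReal_le_ofReal_iff hC] at hfC

section Oleinik

variable {g v : ℝ → ℝ} {c p t s : ℝ}

theorem sub_lt_of_oleinik (hp : 0 ≤ p) (hc : 0 ≤ c) (ht : 0 < t)
    (hg : ∀ a s : ℝ, 0 < s → c * s ^ p ≤ g (a + s) - g a)
    (hv : ∀ x y : ℝ, x < y → g (v y) - g (v x) ≤ (y - x) / t)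
    (hs : 0 < s) {x y : ℝ} (hxy : x < y) (hlen : y - x < c * t * s ^ p) :
    v y - v x < s := by
  by_contra! hjump
  have hgrow : c * s ^ p ≤ g (v y) - g (v x) := calc
    c * s ^ p ≤ c * (v y - v x) ^ p := by gcongr
    _ ≤ g (v x + (v y - v x)) - g (v x) := hg _ _ (by linarith)
    _ = g (v y) - g (v x) := by ring_nf
  have hshort : (y - x) / t < c * s ^ p := by rw [div_lt_iff₀ ht]; linarith
  linarith [hv x y hxy]

theorem exists_le_abs_on_Ioo_of_oleinik (hp : 0 ≤ p) (hc : 0 ≤ c) (ht : 0 < t)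
    (hg : ∀ a s : ℝ, 0 < s → c * s ^ p ≤ g (a + s) - g a)
    (hv : ∀ x y : ℝ, x < y → g (v y) - g (v x) ≤ (y - x) / t)
    (hs : 0 < s) {x₀ : ℝ} (hx₀ : 2 * s ≤ |v x₀|) :
    ∃ a, ∀ x ∈ Ioo a (a + c * t * s ^ p), s ≤ |v x| := by
  rcases le_or_gt 0 (v x₀) with hpos | hneg
  · refine ⟨x₀ - c * t * s ^ p, fun x hx => ?_⟩
    rw [sub_add_cancel] at hx
    have := sub_lt_of_oleinik hp hc ht hg hv hs hx.2 (by linarith [hx.1])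
    rw [abs_of_nonneg hpos] at hx₀
    exact (by linarith : s ≤ v x).trans (le_abs_self _)
  · refine ⟨x₀, fun x hx => ?_⟩
    have := sub_lt_of_oleinik hp hc ht hg hv hs hx.1 (by linarith [hx.2])
    rw [abs_of_neg hneg] at hx₀
    exact (by linarith : s ≤ -v x).trans (neg_le_abs _)

theorem mul_rpow_succ_le_integral_abs_of_oleinik (hp : 0 ≤ p) (hc : 0 ≤ c) (ht : 0 < t)
    (hg : ∀ a s : ℝ, 0 < s → c * s ^ p ≤ g (a + s) - g a)
    (hv : ∀ x y : ℝ, x < y → g (v y) - g (v x) ≤ (y - x) / t) (hvi : Integrable v)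
    (hs : 0 < s) {x₀ : ℝ} (hx₀ : 2 * s ≤ |v x₀|) :
    c * t * s ^ (p + 1) ≤ ∫ x, |v x| := by
  obtain ⟨a, ha⟩ := exists_le_abs_on_Ioo_of_oleinik hp hc ht hg hv hs hx₀
  calc c * t * s ^ (p + 1) = s * (c * t * s ^ p) := by rw [Real.rpow_add_one hs.ne']; ring
    _ ≤ ∫ x, |v x| := mul_le_integral_norm_of_le_norm_on_Ioo hvi (by positivity) ha

theorem abs_le_of_oleinik (hp : 0 ≤ p) (hc : 0 < c) (ht : 0 < t)
    (hg : ∀ a s : ℝ, 0 < s → c * s ^ p ≤ g (a + s) - g a)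
    (hv : ∀ x y : ℝ, x < y → g (v y) - g (v x) ≤ (y - x) / t) (hvi : Integrable v) (x₀ : ℝ) :
    |v x₀| ≤ 2 * ((∫ x, |v x|) / (c * t)) ^ (1 / (p + 1)) := by
  have hI : 0 ≤ (∫ x, |v x|) / (c * t) := by positivity
  rcases (abs_nonneg (v x₀)).eq_or_lt with hzero | hpos
  · rw [← hzero]; positivity
  have hs : 0 < |v x₀| / 2 := by positivity
  have key := mul_rpow_succ_le_integral_abs_of_oleinik hp hc.le ht hg hv hvi hs
    (by ring : 2 * (|v x₀| / 2) = |v x₀|).le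
  have : |v x₀| / 2 ≤ ((∫ x, |v x|) / (c * t)) ^ (1 / (p + 1)) := by
    rw [one_div, Real.le_rpow_inv_iff_of_pos hs.le hI (by linarith), le_div_iff₀ (by positivity)]
    linarith
  linarith

end Oleinik

theorem linf_decay_from_oleinik_L1_general
    (p₁ C_f t E : ℝ) (f v : ℝ → ℝ)
    (hp₁ : 1 ≤ p₁) (hCf : 0 < C_f) (ht : 0 < t) (hE : 0 < E)
    (hincr : ∀ a s : ℝ, 0 < s → C_f * s ^ p₁ ≤ deriv f (a + s) - deriv f a)
    (hv1 : Integrable v volume)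
    (hvE : eLpNorm v 1 volume ≤ ENNReal.ofReal E)
    (hOleinik : ∀ x y : ℝ, x < y → deriv f (v y) - deriv f (v x) ≤ (y - x) / t) :
    MemLp v ⊤ volume ∧
      eLpNorm v ⊤ volume ≤ ENNReal.ofReal (4 * (E / (C_f * t)) ^ (1 / (p₁ + 1))) := by
  have hL1 : ∫ x, |v x| ≤ E := integral_norm_le_of_eLpNorm_one_le hv1 hE.le hvE
  have hbound : ∀ x, ‖v x‖ ≤ 4 * (E / (C_f * t)) ^ (1 / (p₁ + 1)) := fun x => calc
    ‖v x‖ ≤ 2 * ((∫ x, |v x|) / (C_f * t)) ^ (1 / (p₁ + 1)) :=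
      abs_le_of_oleinik (by linarith) hCf ht hincr hOleinik hv1 x
    _ ≤ 2 * (E / (C_f * t)) ^ (1 / (p₁ + 1)) := by gcongr
    _ ≤ 4 * (E / (C_f * t)) ^ (1 / (p₁ + 1)) := by gcongr; norm_num
  have hae : ∀ᵐ x, ‖v x‖ ≤ 4 * (E / (C_f * t)) ^ (1 / (p₁ + 1)) := .of_forall hbound
  exact ⟨memLp_top_of_bound hv1.aestronglyMeasurable _ hae,
    eLpNorm_exponent_top (f := v) ▸ eLpNormEssSup_le_of_ae_bound hae⟩

/-- **`L∞` decay from the Oleinik estimate, `L¹` data** (Remark 2.3).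
If `f` is `C¹` with `f'(a+s) - f'(a) ≥ C_f s^{p₁}` for all `a ∈ ℝ`, `s > 0`, and
`v ∈ L¹(ℝ)` satisfies `‖v‖_{L¹} ≤ E` together with the Oleinik-type estimate
`f'(v(y)) - f'(v(x)) ≤ (y-x)/t` for all `x < y`, then `v ∈ L∞(ℝ)` with
`‖v‖_{L∞} ≤ 4 (E/(C_f t))^{1/(p₁+1)}`. -/
theorem linf_decay_from_oleinik_L1
    (p₁ C_f t E : ℝ) (f v : ℝ → ℝ)
    (hp₁ : 1 ≤ p₁) (hCf : 0 < C_f) (ht : 0 < t) (hE : 0 < E)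
    (hf : ContDiff ℝ 1 f)
    (hincr : ∀ a s : ℝ, 0 < s → C_f * s ^ p₁ ≤ deriv f (a + s) - deriv f a)
    (hv1 : Integrable v volume)
    (hvE : eLpNorm v 1 volume ≤ ENNReal.ofReal E)
    (hOleinik : ∀ x y : ℝ, x < y → deriv f (v y) - deriv f (v x) ≤ (y - x) / t) :
    MemLp v ⊤ volume ∧
      eLpNorm v ⊤ volume ≤ ENNReal.ofReal (4 * (E / (C_f * t)) ^ (1 / (p₁ + 1))) :=
  linf_decay_from_oleinik_L1_general p₁ C_f t E f v hp₁ hCf ht hE hincr hv1 hvE hOleinik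
end

section
/- Let K : ℝ∖{0} → ℝ be measurable with |K(x)| ≤ C_K/|x| for all x ≠ 0, let r > 0 and κ > 0, and let g ∈ L²(ℝ) have support contained in the interval [−r,r]. Then for a.e. x ∈ ℝ∖[−r−κ, r+κ] the integral G[g](x) = ∫_ℝ K(x−y) g(y) dy is absolutely convergent (no principal value needed), and ‖G[g]‖_{L²(ℝ∖[−r−κ, r+κ])} ≤ 2C_K · ‖g‖_{L²(ℝ)} · √(r/κ). -/
open MeasureTheory Set Filter Topology
open scoped ENNReal

/-!
For `|x| > r + κ` the kernel is only evaluated at points with `|x - y| ≥ |x| - r ≥ κ`, so the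
integral converges absolutely and `|G[g](x)| ≤ C_K ‖g‖₁ / (|x| - r)`. Cauchy–Schwarz on `[-r, r]`
gives `‖g‖₁ ≤ √(2r) ‖g‖₂`, and `∫_{|x| > r + κ} (|x| - r)⁻² dx = 2 / κ`.
-/

lemma ENNReal.ofReal_rpow_half (x : ℝ) : ENNReal.ofReal x ^ (1 / 2 : ℝ) = ENNReal.ofReal √x := by
  rw [ENNReal.ofReal, ← ENNReal.coe_rpow_of_nonneg _ (by norm_num), ← NNReal.sqrt_eq_rpow,
    Real.sqrt, ENNReal.ofReal_coe_nnreal]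

lemma eLpNorm_le_eLpNorm_mul_rpow_measure_of_support_subset {α ε : Type*} [MeasurableSpace α]
    {μ : Measure α} [TopologicalSpace ε] [ENormedAddMonoid ε] {f : α → ε} {s : Set α}
    {p q : ℝ≥0∞} (hpq : p ≤ q) (hf : AEStronglyMeasurable f μ) (hs : Function.support f ⊆ s) :
    eLpNorm f p μ ≤ eLpNorm f q μ * μ s ^ (1 / p.toReal - 1 / q.toReal) := by
  have := eLpNorm_le_eLpNorm_mul_rpow_measure_univ hpq hf.restrict (μ := μ.restrict s)
  rwa [eLpNorm_restrict_eq_of_support_subset hs, eLpNorm_restrict_eq_of_support_subset hs,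
    Measure.restrict_apply_univ] at this

lemma ofReal_integral_abs_le_sqrt_mul_eLpNorm_two_of_support_subset_Icc {f : ℝ → ℝ} {a b : ℝ}
    (hf : Integrable f) (hs : Function.support f ⊆ Icc a b) :
    ENNReal.ofReal (∫ x, |f x|) ≤ ENNReal.ofReal √(b - a) * eLpNorm f 2 volume := by
  have hL1 := ofReal_integral_norm_eq_lintegral_enorm hf
  simp only [Real.norm_eq_abs] at hL1
  have hHolder := eLpNorm_le_eLpNorm_mul_rpow_measure_of_support_subset one_le_two hf.1 hs
  rw [Real.volume_Icc, eLpNorm_one_eq_lintegral_enorm] at hHolder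
  norm_num at hHolder
  rwa [hL1, ← ENNReal.ofReal_rpow_half, mul_comm]

section Kernel

variable {E : Type*} [NormedAddCommGroup E] {K g : E → ℝ} {C r : ℝ}

lemma abs_mul_le_of_support_subset_closedBall (hK : ∀ z, z ≠ 0 → |K z| ≤ C / ‖z‖)
    (hg : Function.support g ⊆ Metric.closedBall 0 r) {x : E} (hx : r < ‖x‖) (y : E) :
    |K (x - y) * g y| ≤ C / (‖x‖ - r) * |g y| := by
  by_cases hy : g y = 0
  · simp [hy]
  have hyr : ‖y‖ ≤ r := mem_closedBall_zero_iff.1 (hg hy)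
  have hdist : ‖x‖ - r ≤ ‖x - y‖ := by linarith [norm_sub_norm_le x y]
  have hpos : 0 < ‖x - y‖ := by linarith
  have hKxy := hK (x - y) (norm_pos_iff.1 hpos)
  have hC : 0 ≤ C := by simpa using (le_div_iff₀ hpos).1 ((abs_nonneg _).trans hKxy)
  rw [abs_mul]
  gcongr
  exact hKxy.trans (div_le_div_of_nonneg_left hC (by linarith) hdist)

variable [MeasurableSpace E] {μ : Measure E}

lemma integrable_mul_of_support_subset_closedBall [MeasurableSub E] (hKm : Measurable K)
    (hK : ∀ z, z ≠ 0 → |K z| ≤ C / ‖z‖) (hg : Function.support g ⊆ Metric.closedBall 0 r)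
    (hgi : Integrable g μ) {x : E} (hx : r < ‖x‖) :
    Integrable (fun y => K (x - y) * g y) μ :=
  (hgi.abs.const_mul _).mono'
    ((hKm.comp (measurable_id.const_sub x)).aestronglyMeasurable.mul hgi.1)
    (ae_of_all _ (abs_mul_le_of_support_subset_closedBall hK hg hx))

lemma abs_integral_mul_le_of_support_subset_closedBall (hK : ∀ z, z ≠ 0 → |K z| ≤ C / ‖z‖)
    (hg : Function.support g ⊆ Metric.closedBall 0 r) (hgi : Integrable g μ) {x : E}
    (hx : r < ‖x‖) :
    |∫ y, K (x - y) * g y ∂μ| ≤ C / (‖x‖ - r) * ∫ y, |g y| ∂μ := by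
  rw [← integral_const_mul]
  exact norm_integral_le_of_norm_le (f := fun y => K (x - y) * g y) (hgi.abs.const_mul _)
    (ae_of_all _ (abs_mul_le_of_support_subset_closedBall hK hg hx))

end Kernel

lemma lt_abs_of_notMem_Icc {a x : ℝ} (hx : x ∈ (Icc (-a) a)ᶜ) : a < |x| := by
  rwa [mem_compl_iff, mem_Icc, ← abs_le, not_le] at hx

lemma lintegral_Ioi_inv_sub_sq {b c : ℝ} (h : b < c) :
    ∫⁻ x in Ioi c, ENNReal.ofReal ((x - b) ^ 2)⁻¹ = ENNReal.ofReal (c - b)⁻¹ := by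
  have hderiv : ∀ x ∈ Ici c, HasDerivAt (fun t => -(t - b)⁻¹) ((x - b) ^ 2)⁻¹ x := by
    intro x hx
    have hxb : x - b ≠ 0 := sub_ne_zero.2 (h.trans_le hx).ne'
    rw [show ((x - b) ^ 2)⁻¹ = -(-1 / (x - b) ^ 2) by ring]
    exact (((hasDerivAt_id x).sub_const b).inv hxb).neg
  have htendsto : Tendsto (fun t : ℝ => -(t - b)⁻¹) atTop (𝓝 0) := by
    simpa [sub_eq_add_neg] using
      (tendsto_inv_atTop_zero.comp (tendsto_atTop_add_const_right _ (-b) tendsto_id)).neg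
  have hint := integrableOn_Ioi_deriv_of_nonneg' hderiv (fun x _ => by positivity) htendsto
  rw [← ofReal_integral_eq_lintegral_ofReal hint (ae_of_all _ fun x => by positivity),
    integral_Ioi_of_hasDerivAt_of_tendsto' hderiv hint htendsto]
  simp

lemma lintegral_compl_Icc_inv_abs_sub_sq_le {r a : ℝ} (h : r < a) :
    ∫⁻ x in (Icc (-a) a)ᶜ, ENNReal.ofReal ((|x| - r) ^ 2)⁻¹ ≤ ENNReal.ofReal (2 / (a - r)) := by
  set φ : ℝ → ℝ≥0∞ := (Ioi a).indicator fun t => ENNReal.ofReal ((t - r) ^ 2)⁻¹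
  have hφ : Measurable φ := by
    refine Measurable.indicator ?_ measurableSet_Ioi
    fun_prop
  calc ∫⁻ x in (Icc (-a) a)ᶜ, ENNReal.ofReal ((|x| - r) ^ 2)⁻¹
      = ∫⁻ x in (Icc (-a) a)ᶜ, φ |x| :=
        setLIntegral_congr_fun measurableSet_Icc.compl fun x hx => by
          simp [φ, lt_abs_of_notMem_Icc hx]
    _ ≤ ∫⁻ x, φ |x| := setLIntegral_le_lintegral _ _
    _ ≤ ∫⁻ x, φ x + φ (-x) := by
        refine lintegral_mono fun x => ?_
        rcases abs_choice x with hx | hx <;> rw [hx]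
        exacts [le_self_add, le_add_self]
    _ = 2 * ∫⁻ x, φ x := by
        rw [lintegral_add_left hφ, lintegral_neg_eq_self, two_mul]
    _ = ENNReal.ofReal (2 / (a - r)) := by
        rw [lintegral_indicator measurableSet_Ioi, lintegral_Ioi_inv_sub_sq h, div_eq_mul_inv,
          ENNReal.ofReal_mul zero_le_two, ENNReal.ofReal_ofNat]

lemma eLpNorm_inv_abs_sub_compl_Icc_le {r κ : ℝ} (hκ : 0 < κ) :
    eLpNorm (fun x : ℝ => (|x| - r)⁻¹) 2 (volume.restrict (Icc (-(r + κ)) (r + κ))ᶜ) ≤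
      ENNReal.ofReal √(2 / κ) := by
  have hsq : ∀ t : ℝ, ‖t⁻¹‖ₑ ^ (2 : ℝ) = ENNReal.ofReal (t ^ 2)⁻¹ := fun t => by
    rw [ENNReal.rpow_two, Real.enorm_eq_ofReal_abs, ← ENNReal.ofReal_pow (abs_nonneg _)]
    simp
  rw [eLpNorm_eq_lintegral_rpow_enorm_toReal two_ne_zero ENNReal.ofNat_ne_top,
    ← ENNReal.ofReal_rpow_half]
  simp only [ENNReal.toReal_ofNat, hsq]
  have := lintegral_compl_Icc_inv_abs_sub_sq_le (lt_add_of_pos_right r hκ)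
  rw [add_sub_cancel_left] at this
  exact ENNReal.rpow_le_rpow this (by norm_num)

theorem tail_estimate_singular_convolution_general
    (K : ℝ → ℝ) (C_K : ℝ) (hKmeas : Measurable K)
    (hKb : ∀ x : ℝ, x ≠ 0 → |K x| ≤ C_K / |x|)
    (r κ : ℝ) (hκ : 0 < κ)
    (g : ℝ → ℝ) (hg : MemLp g 2 volume)
    (hsupp : Function.support g ⊆ Set.Icc (-r) r) :
    (∀ᵐ x ∂(volume.restrict ((Set.Icc (-(r + κ)) (r + κ))ᶜ)),
      Integrable (fun y => K (x - y) * g y) volume) ∧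
    eLpNorm (fun x => ∫ y : ℝ, K (x - y) * g y) 2
        (volume.restrict ((Set.Icc (-(r + κ)) (r + κ))ᶜ)) ≤
      ENNReal.ofReal (2 * C_K * Real.sqrt (r / κ)) * eLpNorm g 2 volume := by
  have hgi : Integrable g := memLp_one_iff_integrable.1 <|
    hg.mono_exponent_of_measure_support_ne_top
      (fun x hx => Function.notMem_support.1 fun h => hx (hsupp h)) measure_Icc_lt_top.ne
      one_le_two
  have hball : Function.support g ⊆ Metric.closedBall 0 r := by
    rwa [Real.closedBall_eq_Icc, zero_sub, zero_add]
  have hfar : ∀ᵐ x ∂(volume.restrict (Icc (-(r + κ)) (r + κ))ᶜ), r < |x| :=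
    (ae_restrict_iff' measurableSet_Icc.compl).2 <| ae_of_all _ fun x hx => by
      linarith [lt_abs_of_notMem_Icc hx]
  refine ⟨hfar.mono fun x hx =>
    integrable_mul_of_support_subset_closedBall hKmeas hKb hball hgi hx, ?_⟩
  have hpointwise : ∀ᵐ x ∂(volume.restrict (Icc (-(r + κ)) (r + κ))ᶜ),
      ‖∫ y, K (x - y) * g y‖ ≤ (C_K * ∫ y, |g y|) * ‖(|x| - r)⁻¹‖ :=
    hfar.mono fun x hx => by
      rw [Real.norm_eq_abs, Real.norm_eq_abs, abs_inv, abs_of_pos (sub_pos.2 hx)]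
      simpa only [div_eq_mul_inv, mul_right_comm, Real.norm_eq_abs] using
        abs_integral_mul_le_of_support_subset_closedBall hKb hball hgi hx
  have hconst : C_K * √(r - -r) * √(2 / κ) = 2 * C_K * √(r / κ) := by
    rw [mul_assoc, ← Real.sqrt_mul' _ (by positivity),
      show (r - -r) * (2 / κ) = 2 ^ 2 * (r / κ) by ring,
      Real.sqrt_mul (by positivity), Real.sqrt_sq zero_le_two]
    ring
  calc eLpNorm (fun x => ∫ y, K (x - y) * g y) 2 (volume.restrict (Icc (-(r + κ)) (r + κ))ᶜ)
      ≤ ENNReal.ofReal (C_K * ∫ y, |g y|) *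
          eLpNorm (fun x : ℝ => (|x| - r)⁻¹) 2 (volume.restrict (Icc (-(r + κ)) (r + κ))ᶜ) :=
        eLpNorm_le_mul_eLpNorm_of_ae_le_mul hpointwise 2
    _ ≤ ENNReal.ofReal C_K * (ENNReal.ofReal √(r - -r) * eLpNorm g 2 volume) *
          ENNReal.ofReal √(2 / κ) := by
        rw [ENNReal.ofReal_mul' (integral_nonneg fun y => abs_nonneg _)]
        gcongr
        · exact ofReal_integral_abs_le_sqrt_mul_eLpNorm_two_of_support_subset_Icc hgi hsupp
        · exact eLpNorm_inv_abs_sub_compl_Icc_le hκ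
    _ = ENNReal.ofReal (2 * C_K * √(r / κ)) * eLpNorm g 2 volume := by
        rw [← hconst, ENNReal.ofReal_mul' (Real.sqrt_nonneg _),
          ENNReal.ofReal_mul' (Real.sqrt_nonneg _)]
        ring

/-- **Tail estimate for the singular convolution of a compactly supported function**
(estimate (2.22)). If `|K(x)| ≤ C_K/|x|` for `x ≠ 0` and `g ∈ L²(ℝ)` has support in
`[-r,r]`, then for a.e. `x` outside `[-r-κ, r+κ]` the integral `G[g](x) = ∫ K(x-y)g(y) dy`
is absolutely convergent, and
`‖G[g]‖_{L²(ℝ∖[-r-κ,r+κ])} ≤ 2 C_K ‖g‖_{L²(ℝ)} √(r/κ)`. -/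
theorem tail_estimate_singular_convolution
    (K : ℝ → ℝ) (C_K : ℝ) (hCK : 0 < C_K) (hKmeas : Measurable K)
    (hKb : ∀ x : ℝ, x ≠ 0 → |K x| ≤ C_K / |x|)
    (r κ : ℝ) (hr : 0 < r) (hκ : 0 < κ)
    (g : ℝ → ℝ) (hg : MemLp g 2 volume)
    (hsupp : Function.support g ⊆ Set.Icc (-r) r) :
    (∀ᵐ x ∂(volume.restrict ((Set.Icc (-(r + κ)) (r + κ))ᶜ)),
      Integrable (fun y => K (x - y) * g y) volume) ∧
    eLpNorm (fun x => ∫ y : ℝ, K (x - y) * g y) 2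
        (volume.restrict ((Set.Icc (-(r + κ)) (r + κ))ᶜ)) ≤
      ENNReal.ofReal (2 * C_K * Real.sqrt (r / κ)) * eLpNorm g 2 volume :=
  tail_estimate_singular_convolution_general K C_K hKmeas hKb r κ hκ g hg hsupp
end

section
/- Let P > 0 and let K be an odd 2P-periodic function, locally integrable on ℝ∖2Pℤ, with |K(x)| ≤ C/|x| for x ∈ [−P,P]∖{0}. Let [a,b] ⊆ [−P,P] and let χ_{[a,b]} denote the characteristic function of [a,b], extended to all of ℝ by 2P-periodicity. Then ‖G_per[χ_{[a,b]}]‖_{L¹([−P,P])} ≤ C·(b−a)·( 2 + 5 ln 2 + 2 ln P − 2 ln(b−a) ). -/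
/-!
By oddness of `K`, the truncated integral at `x` equals `∫_ε^P K(y) (χ(x-y) - χ(x+y)) dy`, so the
principal value is `∫_0^P K(y) (χ(x-y) - χ(x+y)) dy` wherever this integral converges absolutely.
By Tonelli, the `L¹` norm of the latter over a period is at most
`∫_0^P (C/y) ‖χ(· - y) - χ(· + y)‖_{L¹(period)} dy`. The difference of the two translates of `χ`
lives near the translated endpoints (measure `≤ 4y`) and on the two translated intervals
(measure `≤ 2(b-a)`), which gives the bound
`∫_0^P (C/y) min(4y, 2(b-a)) dy = 2C(b-a)(1 + ln 2 + ln P - ln(b-a))`.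
The same finite bound on every period yields absolute convergence for almost every `x`.
-/

open MeasureTheory Filter Topology
open scoped ENNReal

noncomputable section

/-- The principal value of the periodic singular convolution
`∫_{(-P,P)} K(y) g(x-y) dy` at the point `x` equals `L`. -/
def PVPerAt (K g : ℝ → ℝ) (P x L : ℝ) : Prop :=
  Tendsto (fun ε : ℝ => ∫ y in Set.Ioo (-P) P \ Set.Ioo (-ε) ε, K y * g (x - y))
    (𝓝[>] 0) (𝓝 L)

/-- The characteristic function of `[a,b]`, extended to all of `ℝ` by `2P`-periodicity. -/
def perIndicator (P a b : ℝ) : ℝ → ℝ :=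
  Set.indicator {x : ℝ | ∃ k : ℤ, x - 2 * k * P ∈ Set.Icc a b} fun _ => (1 : ℝ)

open Set Real Function
open scoped Pointwise

def perIcc (P c d : ℝ) : Set ℝ := {x | ∃ k : ℤ, x - 2 * k * P ∈ Icc c d}

theorem perIndicator_eq_indicator (P a b : ℝ) :
    perIndicator P a b = (perIcc P a b).indicator fun _ => 1 := rfl

theorem perIcc_eq_iUnion_vadd (P c d : ℝ) :
    perIcc P c d = ⋃ g : AddSubgroup.zmultiples (2 * P), g +ᵥ Icc c d := by
  ext x
  simp only [perIcc, mem_iUnion, mem_vadd_set_iff_neg_vadd_mem, Subtype.exists,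
    AddSubgroup.mem_zmultiples_iff, exists_prop, exists_exists_eq_and, AddSubgroup.vadd_def,
    vadd_eq_add, neg_add_eq_sub, zsmul_eq_mul, mul_left_comm _ (2 : ℝ), mul_assoc, mem_ofPred_eq]

theorem volume_perIcc_inter_Ioc_le {P : ℝ} (hP : 0 < P) (c d t : ℝ) :
    volume (perIcc P c d ∩ Ioc t (t + 2 * P)) ≤ ENNReal.ofReal (d - c) := by
  -- The window is a fundamental domain of `2Pℤ`, so the pieces of the translates of `[c, d]`
  -- inside it add up to the measure of `[c, d]`.
  have h := isAddFundamentalDomain_Ioc (T := 2 * P) (by positivity) t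
  rw [perIcc_eq_iUnion_vadd, iUnion_inter, ← Real.volume_Icc, h.measure_eq_tsum (Icc c d)]
  exact measure_iUnion_le _

theorem measurableSet_perIcc (P c d : ℝ) : MeasurableSet (perIcc P c d) := by
  rw [perIcc_eq_iUnion_vadd]
  exact .iUnion fun g => measurableSet_Icc.const_vadd g

theorem measurable_perIndicator (P a b : ℝ) : Measurable (perIndicator P a b) :=
  measurable_const.indicator (measurableSet_perIcc P a b)

theorem norm_perIndicator_le (P a b t : ℝ) : ‖perIndicator P a b t‖ ≤ 1 :=
  (norm_indicator_le_norm_self _ t).trans_eq norm_one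

theorem perIndicator_sub (P a b x y : ℝ) :
    perIndicator P a b (x - y) = perIndicator P (a + y) (b + y) x := by
  have hmem : x - y ∈ perIcc P a b ↔ x ∈ perIcc P (a + y) (b + y) := by
    simp only [perIcc, mem_ofPred_eq, mem_Icc]
    refine exists_congr fun k => ?_
    constructor <;> rintro ⟨h₁, h₂⟩ <;> constructor <;> linarith
  classical
  simp only [perIndicator_eq_indicator, indicator_apply, hmem]

theorem perIndicator_add (P a b x y : ℝ) :
    perIndicator P a b (x + y) = perIndicator P (a - y) (b - y) x := by
  simpa [sub_eq_add_neg] using perIndicator_sub P a b x (-y)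

theorem mem_perIcc_right_of_sub_mem_of_add_notMem {P a b x y : ℝ} (hy : 0 ≤ y)
    (h₁ : x - y ∈ perIcc P a b) (h₂ : x + y ∉ perIcc P a b) : x ∈ perIcc P (b - y) (b + y) := by
  obtain ⟨k, hk₁, hk₂⟩ := h₁
  refine ⟨k, ?_, by linarith⟩
  by_contra! h
  exact h₂ ⟨k, by linarith, by linarith⟩

theorem mem_perIcc_left_of_add_mem_of_sub_notMem {P a b x y : ℝ} (hy : 0 ≤ y)
    (h₁ : x + y ∈ perIcc P a b) (h₂ : x - y ∉ perIcc P a b) : x ∈ perIcc P (a - y) (a + y) := by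
  obtain ⟨k, hk₁, hk₂⟩ := h₁
  refine ⟨k, by linarith, ?_⟩
  by_contra! h
  exact h₂ ⟨k, by linarith, by linarith⟩

theorem enorm_perIndicator_sub_le_endpoints {P a b y : ℝ} (hy : 0 ≤ y) (x : ℝ) :
    ‖perIndicator P a b (x - y) - perIndicator P a b (x + y)‖ₑ
      ≤ (perIcc P (a - y) (a + y)).indicator 1 x + (perIcc P (b - y) (b + y)).indicator 1 x := by
  classical
  simp only [perIndicator_eq_indicator, indicator_apply]
  by_cases h₁ : x - y ∈ perIcc P a b <;> by_cases h₂ : x + y ∈ perIcc P a b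
  · simp [h₁, h₂]
  · simp [h₁, h₂, mem_perIcc_right_of_sub_mem_of_add_notMem hy h₁ h₂]
  · simp [h₁, h₂, mem_perIcc_left_of_add_mem_of_sub_notMem hy h₂ h₁]
  · simp [h₁, h₂]

theorem enorm_perIndicator_sub_le_translates (P a b y x : ℝ) :
    ‖perIndicator P a b (x - y) - perIndicator P a b (x + y)‖ₑ
      ≤ (perIcc P (a + y) (b + y)).indicator 1 x + (perIcc P (a - y) (b - y)).indicator 1 x := by
  refine (enorm_sub_le).trans ?_
  simp only [perIndicator_sub, perIndicator_add, perIndicator_eq_indicator,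
    enorm_indicator_eq_indicator_enorm, enorm_one]
  rfl

theorem setLIntegral_indicator_perIcc_le {P : ℝ} (hP : 0 < P) (c d t : ℝ) :
    ∫⁻ x in Ioc t (t + 2 * P), (perIcc P c d).indicator 1 x ≤ ENNReal.ofReal (d - c) := by
  rw [lintegral_indicator_one (measurableSet_perIcc P c d),
    Measure.restrict_apply (measurableSet_perIcc P c d)]
  exact volume_perIcc_inter_Ioc_le hP c d t

theorem setLIntegral_enorm_perIndicator_sub_le {P a b y : ℝ} (hP : 0 < P) (hab : a ≤ b)
    (hy : 0 ≤ y) (t : ℝ) :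
    ∫⁻ x in Ioc t (t + 2 * P), ‖perIndicator P a b (x - y) - perIndicator P a b (x + y)‖ₑ
      ≤ ENNReal.ofReal (min (4 * y) (2 * (b - a))) := by
  have hm : ∀ c d, Measurable ((perIcc P c d).indicator (1 : ℝ → ℝ≥0∞)) := fun c d =>
    measurable_one.indicator (measurableSet_perIcc P c d)
  rw [ENNReal.ofReal_min]
  refine le_min ?_ ?_
  · calc _ ≤ ∫⁻ x in Ioc t (t + 2 * P),
          (perIcc P (a - y) (a + y)).indicator 1 x + (perIcc P (b - y) (b + y)).indicator 1 x :=
          lintegral_mono (enorm_perIndicator_sub_le_endpoints hy)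
      _ ≤ ENNReal.ofReal (a + y - (a - y)) + ENNReal.ofReal (b + y - (b - y)) := by
          rw [lintegral_add_left (hm _ _)]
          gcongr <;> exact setLIntegral_indicator_perIcc_le hP _ _ t
      _ = ENNReal.ofReal (4 * y) := by
          rw [← ENNReal.ofReal_add (by linarith) (by linarith)]; ring_nf
  · calc _ ≤ ∫⁻ x in Ioc t (t + 2 * P),
          (perIcc P (a + y) (b + y)).indicator 1 x + (perIcc P (a - y) (b - y)).indicator 1 x :=
          lintegral_mono (enorm_perIndicator_sub_le_translates P a b y)
      _ ≤ ENNReal.ofReal (b + y - (a + y)) + ENNReal.ofReal (b - y - (a - y)) := by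
          rw [lintegral_add_left (hm _ _)]
          gcongr <;> exact setLIntegral_indicator_perIcc_le hP _ _ t
      _ = ENNReal.ofReal (2 * (b - a)) := by
          rw [← ENNReal.ofReal_add (by linarith) (by linarith)]; ring_nf

section OddKernel

variable {K f : ℝ → ℝ} {P C : ℝ}

theorem integrableOn_of_abs_le_div (hK : Measurable K)
    (hKb : ∀ y ∈ Icc (-P) P, y ≠ 0 → |K y| ≤ C / |y|) {s : Set ℝ} (hs : MeasurableSet s)
    (hsP : s ⊆ Icc (-P) P) {ε : ℝ} (hε : 0 < ε) (hsε : ∀ y ∈ s, ε ≤ |y|) : IntegrableOn K s := by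
  refine Measure.integrableOn_of_bounded (M := C / ε)
    ((measure_mono hsP).trans_lt measure_Icc_lt_top).ne hK.aestronglyMeasurable ?_
  refine (ae_restrict_iff' hs).2 (.of_forall fun y hy => ?_)
  have hy₀ : 0 < |y| := hε.trans_le (hsε y hy)
  have hKy := hKb y (hsP hy) (abs_pos.1 hy₀)
  have hC : 0 ≤ C := by simpa using (le_div_iff₀ hy₀).1 ((abs_nonneg _).trans hKy)
  exact hKy.trans (div_le_div_of_nonneg_left hC hε (hsε y hy))

theorem setIntegral_Ioo_diff_Ioo_eq_of_odd (hKodd : ∀ y, K (-y) = -K y) {x ε : ℝ}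
    (hε : 0 < ε) (hεP : ε ≤ P)
    (hl : IntegrableOn (fun y => K y * f (x - y)) (Icc (-P) (-ε)))
    (hr : IntegrableOn (fun y => K y * f (x - y)) (Icc ε P))
    (hr' : IntegrableOn (fun y => K y * f (x + y)) (Icc ε P)) :
    ∫ y in Ioo (-P) P \ Ioo (-ε) ε, K y * f (x - y)
      = ∫ y in ε..P, K y * (f (x - y) - f (x + y)) := by
  have hset : Ioo (-P) P \ Ioo (-ε) ε = Ioc (-P) (-ε) ∪ Ico ε P := by
    ext y
    simp only [Set.mem_sdiff, mem_Ioo, mem_union, mem_Ioc, mem_Ico]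
    grind
  have hdisj : Disjoint (Ioc (-P) (-ε)) (Ico ε P) :=
    disjoint_left.2 fun y h₁ h₂ => by linarith [h₁.2, h₂.1]
  have hreflect : ∫ y in -P..-ε, K y * f (x - y) = -∫ y in ε..P, K y * f (x + y) := by
    rw [← intervalIntegral.integral_comp_neg, ← intervalIntegral.integral_neg]
    simp only [hKodd, sub_neg_eq_add, neg_mul]
  rw [hset, setIntegral_union hdisj measurableSet_Ico (hl.mono_set Ioc_subset_Icc_self)
      (hr.mono_set Ico_subset_Icc_self), setIntegral_congr_set Ico_ae_eq_Ioc,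
    ← intervalIntegral.integral_of_le (neg_le_neg hεP), ← intervalIntegral.integral_of_le hεP,
    hreflect]
  simp_rw [mul_sub]
  rw [intervalIntegral.integral_sub ((intervalIntegrable_iff_integrableOn_Icc_of_le hεP).2 hr)
    ((intervalIntegrable_iff_integrableOn_Icc_of_le hεP).2 hr')]
  ring

theorem pvPerAt_of_odd (hP : 0 < P) (hK : Measurable K)
    (hKb : ∀ y ∈ Icc (-P) P, y ≠ 0 → |K y| ≤ C / |y|) (hKodd : ∀ y, K (-y) = -K y)
    (hf : Measurable f) {M : ℝ} (hfM : ∀ t, ‖f t‖ ≤ M) {x : ℝ}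
    (hx : IntegrableOn (fun y => K y * (f (x - y) - f (x + y))) (Ioc 0 P)) :
    PVPerAt K f P x (∫ y in Ioc 0 P, K y * (f (x - y) - f (x + y))) := by
  have hint : ∀ {s : Set ℝ}, MeasurableSet s → s ⊆ Icc (-P) P → ∀ {ε : ℝ}, 0 < ε →
      (∀ y ∈ s, ε ≤ |y|) → IntegrableOn (fun y => K y * f (x - y)) s :=
    fun hs hsP _ hε hsε => (integrableOn_of_abs_le_div hK hKb hs hsP hε hsε).mul_bdd
      (hf.comp (measurable_const.sub measurable_id)).aestronglyMeasurable
      (.of_forall fun _ => hfM _)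
  have hprimitive : Tendsto (fun ε => ∫ y in ε..P, K y * (f (x - y) - f (x + y))) (𝓝[>] 0)
      (𝓝 (∫ y in 0..P, K y * (f (x - y) - f (x + y)))) := by
    have hcont := intervalIntegral.continuousOn_primitive_interval_left
      (by rw [uIcc_of_le hP.le]; exact (integrableOn_Icc_iff_integrableOn_Ioc enorm_ne_top).2 hx)
    refine (hcont 0 left_mem_uIcc).tendsto.mono_left (nhdsWithin_le_of_mem ?_)
    rw [uIcc_of_le hP.le]
    exact Icc_mem_nhdsGT hP
  rw [PVPerAt, ← intervalIntegral.integral_of_le hP.le]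
  refine hprimitive.congr' ?_
  filter_upwards [Ioo_mem_nhdsGT hP] with ε ⟨hε, hεP⟩
  have hr := hint measurableSet_Icc (Icc_subset_Icc (by linarith) le_rfl) hε
    fun y hy => hy.1.trans (le_abs_self y)
  refine (setIntegral_Ioo_diff_Ioo_eq_of_odd hKodd hε hεP.le ?_ hr ?_).symm
  · exact hint measurableSet_Icc (Icc_subset_Icc le_rfl (by linarith)) hε
      fun y hy => by rw [abs_of_neg (by linarith [hy.2])]; linarith [hy.2]
  · refine (hr.sub (hx.mono_set fun y hy => ⟨hε.trans_le hy.1, hy.2⟩)).congr_fun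
      (fun y _ => by simp only [Pi.sub_apply]; ring) measurableSet_Icc

theorem setLIntegral_lintegral_enorm_le (hK : Measurable K)
    (hKb : ∀ y ∈ Icc (-P) P, y ≠ 0 → |K y| ≤ C / |y|) (hf : Measurable f) (s : Set ℝ) :
    ∫⁻ x in s, ∫⁻ y in Ioc 0 P, ‖K y * (f (x - y) - f (x + y))‖ₑ
      ≤ ∫⁻ y in Ioc 0 P, ENNReal.ofReal (C / y) * ∫⁻ x in s, ‖f (x - y) - f (x + y)‖ₑ := by
  rw [lintegral_lintegral_swap (by fun_prop)]
  refine setLIntegral_mono' measurableSet_Ioc fun y ⟨hy, hyP⟩ => ?_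
  have hKy : ‖K y‖ₑ ≤ ENNReal.ofReal (C / y) := by
    rw [Real.enorm_eq_ofReal_abs]
    exact ENNReal.ofReal_le_ofReal <|
      (hKb y ⟨by linarith, hyP⟩ hy.ne').trans_eq (by rw [abs_of_pos hy])
  simp_rw [enorm_mul]
  rw [lintegral_const_mul' _ _ enorm_ne_top]
  gcongr

end OddKernel

section IteratedIntegral

variable {α β E : Type*} [MeasurableSpace α] [MeasurableSpace β] {μ : Measure α} {ν : Measure β}
  [SFinite ν] [NormedAddCommGroup E] {F : α → β → E}

theorem ae_integrable_of_lintegral_lintegral_enorm_ne_top (hF : StronglyMeasurable (uncurry F))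
    (h : ∫⁻ x, ∫⁻ y, ‖F x y‖ₑ ∂ν ∂μ ≠ ⊤) : ∀ᵐ x ∂μ, Integrable (F x) ν := by
  filter_upwards [ae_lt_top hF.enorm.lintegral_prod_right' h] with x hx
  exact ⟨(hF.comp_measurable measurable_prodMk_left).aestronglyMeasurable, hx⟩

variable [NormedSpace ℝ E]

theorem integrable_integral_of_lintegral_lintegral_enorm_ne_top
    (hF : StronglyMeasurable (uncurry F)) (h : ∫⁻ x, ∫⁻ y, ‖F x y‖ₑ ∂ν ∂μ ≠ ⊤) :
    Integrable (fun x => ∫ y, F x y ∂ν) μ :=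
  ⟨hF.integral_prod_right'.aestronglyMeasurable,
    (lintegral_mono fun _ => enorm_integral_le_lintegral_enorm _).trans_lt h.lt_top⟩

theorem integral_norm_integral_le_of_lintegral_lintegral_enorm_le
    (hF : StronglyMeasurable (uncurry F)) {M : ℝ} (hM : 0 ≤ M)
    (h : ∫⁻ x, ∫⁻ y, ‖F x y‖ₑ ∂ν ∂μ ≤ ENNReal.ofReal M) : ∫ x, ‖∫ y, F x y ∂ν‖ ∂μ ≤ M := by
  have hG : AEStronglyMeasurable (fun x => ∫ y, F x y ∂ν) μ :=
    hF.integral_prod_right'.aestronglyMeasurable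
  rw [integral_norm_eq_lintegral_enorm hG]
  exact ENNReal.toReal_le_of_le_ofReal hM
    ((lintegral_mono fun _ => enorm_integral_le_lintegral_enorm _).trans h)

end IteratedIntegral

theorem ae_of_forall_ae_restrict_Ioc {T : ℝ} (hT : 0 < T) {p : ℝ → Prop}
    (h : ∀ t, ∀ᵐ x ∂volume.restrict (Ioc t (t + T)), p x) : ∀ᵐ x, p x := by
  rw [← Measure.restrict_univ (μ := volume), ← iUnion_Ioc_add_zsmul hT 0, ae_restrict_iUnion_iff]
  intro n
  simpa only [zero_add, add_one_zsmul] using h (n • T)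

section Computation

variable {P C L : ℝ}

theorem div_mul_min_nonneg (hC : 0 ≤ C) (hL : 0 ≤ L) {y : ℝ} (hy : 0 < y) :
    0 ≤ C / y * min (4 * y) (2 * L) :=
  mul_nonneg (div_nonneg hC hy.le) (le_min (by linarith) (by linarith))

theorem integrableOn_div_mul_min (hL : 0 ≤ L) :
    IntegrableOn (fun y => C / y * min (4 * y) (2 * L)) (Ioc 0 P) := by
  refine Measure.integrableOn_of_bounded (M := 4 * |C|) (by simp) (by fun_prop) ?_
  refine (ae_restrict_iff' measurableSet_Ioc).2 (.of_forall fun y ⟨hy, _⟩ => ?_)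
  have hmin : 0 ≤ min (4 * y) (2 * L) := le_min (by positivity) (by positivity)
  calc ‖C / y * min (4 * y) (2 * L)‖ = |C| / y * min (4 * y) (2 * L) := by
        rw [Real.norm_eq_abs, abs_mul, abs_div, abs_of_pos hy, abs_of_nonneg hmin]
    _ ≤ |C| / y * (4 * y) := by gcongr; exact min_le_left _ _
    _ = 4 * |C| := by field_simp

theorem integral_div_mul_min_eq (hL : 0 < L) (hLP : L ≤ 2 * P) :
    ∫ y in Ioc 0 P, C / y * min (4 * y) (2 * L) = 2 * C * L * (1 + log 2 + log P - log L) := by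
  have hL₂ : 0 < L / 2 := half_pos hL
  have hL₂P : L / 2 ≤ P := by linarith
  have hP : 0 < P := by linarith
  have hint := integrableOn_div_mul_min (C := C) (P := P) hL.le
  have hnear : EqOn (fun y => C / y * min (4 * y) (2 * L)) (fun _ => 4 * C) (Ioc 0 (L / 2)) :=
    fun y ⟨hy, hyL⟩ => by
      dsimp only
      rw [min_eq_left (by linarith)]
      field_simp
  have hfar : EqOn (fun y => C / y * min (4 * y) (2 * L)) (fun y => 2 * C * L * y⁻¹)
      (Ioc (L / 2) P) := fun y ⟨hy, _⟩ => by
    dsimp only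
    rw [min_eq_right (by linarith)]
    field_simp
  rw [← Ioc_union_Ioc_eq_Ioc hL₂.le hL₂P, setIntegral_union (Ioc_disjoint_Ioc_of_le le_rfl)
      measurableSet_Ioc (hint.mono_set (Ioc_subset_Ioc_right hL₂P))
      (hint.mono_set (Ioc_subset_Ioc_left hL₂.le)),
    setIntegral_congr_fun measurableSet_Ioc hnear, setIntegral_congr_fun measurableSet_Ioc hfar,
    setIntegral_const, ← intervalIntegral.integral_of_le hL₂P, intervalIntegral.integral_const_mul,
    integral_inv (by rw [uIcc_of_le hL₂P]; exact fun h => hL₂.not_ge h.1),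
    log_div hP.ne' hL₂.ne', log_div hL.ne' two_ne_zero]
  rw [Real.volume_real_Ioc_of_le hL₂.le, smul_eq_mul]
  ring

theorem setLIntegral_ofReal_div_mul_min_eq (hC : 0 ≤ C) (hL : 0 ≤ L) :
    ∫⁻ y in Ioc 0 P, ENNReal.ofReal (C / y) * ENNReal.ofReal (min (4 * y) (2 * L))
      = ENNReal.ofReal (∫ y in Ioc 0 P, C / y * min (4 * y) (2 * L)) := by
  rw [ofReal_integral_eq_lintegral_ofReal (integrableOn_div_mul_min hL) ?_]
  · refine setLIntegral_congr_fun measurableSet_Ioc fun y hy => ?_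
    rw [ENNReal.ofReal_mul' (le_min (by linarith [hy.1]) (by linarith))]
  · exact (ae_restrict_iff' measurableSet_Ioc).2
      (.of_forall fun _ hy => div_mul_min_nonneg hC hL hy.1)

theorem integral_div_mul_min_nonneg (hC : 0 ≤ C) (hL : 0 ≤ L) :
    0 ≤ ∫ y in Ioc 0 P, C / y * min (4 * y) (2 * L) :=
  setIntegral_nonneg measurableSet_Ioc fun _ hy => div_mul_min_nonneg hC hL hy.1

theorem integral_div_mul_min_le (hC : 0 ≤ C) (hL : 0 ≤ L) (hLP : L ≤ 2 * P) :
    ∫ y in Ioc 0 P, C / y * min (4 * y) (2 * L)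
      ≤ C * L * (2 + 5 * log 2 + 2 * log P - 2 * log L) := by
  rcases hL.eq_or_lt with rfl | hL
  · rw [setIntegral_eq_zero_of_forall_eq_zero fun y hy => by
      rw [mul_zero, min_eq_right (by linarith [hy.1]), mul_zero]]
    simp
  · rw [integral_div_mul_min_eq hL hLP]
    nlinarith [mul_nonneg (mul_nonneg hC hL.le) (log_nonneg one_le_two)]

end Computation

theorem periodic_indicator_L1_bound_general
    (P C : ℝ) (hP : 0 < P) (hC : 0 < C)
    (K : ℝ → ℝ) (hKmeas : Measurable K)
    (hKodd : ∀ x : ℝ, K (-x) = -K x)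
    (hKb : ∀ x ∈ Set.Icc (-P) P, x ≠ 0 → |K x| ≤ C / |x|)
    (a b : ℝ) (hab : a ≤ b) (ha : -P ≤ a) (hb : b ≤ P) :
    ∃ Gg : ℝ → ℝ,
      (∀ᵐ x ∂volume, PVPerAt K (perIndicator P a b) P x (Gg x)) ∧
      IntegrableOn Gg (Set.Icc (-P) P) ∧
      ∫ x in Set.Icc (-P) P, |Gg x| ≤
        C * (b - a) * (2 + 5 * Real.log 2 + 2 * Real.log P - 2 * Real.log (b - a)) := by
  set g := perIndicator P a b
  set F : ℝ → ℝ → ℝ := fun x y => K y * (g (x - y) - g (x + y))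
  have hg : Measurable g := measurable_perIndicator P a b
  have hF : StronglyMeasurable (uncurry F) := by
    unfold F; fun_prop
  set M := ∫ y in Ioc 0 P, C / y * min (4 * y) (2 * (b - a))
  have hbound (t : ℝ) : ∫⁻ x in Ioc t (t + 2 * P), ∫⁻ y in Ioc 0 P, ‖F x y‖ₑ ≤ ENNReal.ofReal M :=
    calc _ ≤ ∫⁻ y in Ioc 0 P, ENNReal.ofReal (C / y) *
          ∫⁻ x in Ioc t (t + 2 * P), ‖g (x - y) - g (x + y)‖ₑ :=
          setLIntegral_lintegral_enorm_le hKmeas hKb hg _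
      _ ≤ ∫⁻ y in Ioc 0 P, ENNReal.ofReal (C / y) * ENNReal.ofReal (min (4 * y) (2 * (b - a))) :=
          setLIntegral_mono' measurableSet_Ioc fun y hy => by
            gcongr; exact setLIntegral_enorm_perIndicator_sub_le hP hab hy.1.le t
      _ = ENNReal.ofReal M := setLIntegral_ofReal_div_mul_min_eq hC.le (sub_nonneg.2 hab)
  have hwindow : volume.restrict (Icc (-P) P) = volume.restrict (Ioc (-P) (-P + 2 * P)) := by
    rw [show -P + 2 * P = P by ring]
    exact (Measure.restrict_congr_set Ioc_ae_eq_Icc).symm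
  refine ⟨fun x => ∫ y in Ioc 0 P, F x y, ?_, ?_, ?_⟩
  · have hint := ae_of_forall_ae_restrict_Ioc (by positivity : 0 < 2 * P) fun t =>
      ae_integrable_of_lintegral_lintegral_enorm_ne_top hF
        (ne_top_of_le_ne_top ENNReal.ofReal_ne_top (hbound t))
    filter_upwards [hint] with x hx
    exact pvPerAt_of_odd hP hKmeas hKb hKodd hg (norm_perIndicator_le P a b) hx
  · rw [IntegrableOn, hwindow]
    exact integrable_integral_of_lintegral_lintegral_enorm_ne_top hF
      (ne_top_of_le_ne_top ENNReal.ofReal_ne_top (hbound (-P)))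
  · rw [hwindow]
    exact (integral_norm_integral_le_of_lintegral_lintegral_enorm_le hF
      (integral_div_mul_min_nonneg hC.le (sub_nonneg.2 hab)) (hbound (-P))).trans
      (integral_div_mul_min_le hC.le (sub_nonneg.2 hab) (by linarith))

/-- **Logarithmic `L¹` bound for the periodic singular convolution of a characteristic
function** (estimate (3.6)). Let `K` be odd, `2P`-periodic with `|K(x)| ≤ C/|x|` on
`[-P,P]∖{0}` and let `[a,b] ⊆ [-P,P]`. Then
`‖G_per[χ_{[a,b]}]‖_{L¹([-P,P])} ≤ C (b-a)(2 + 5 ln 2 + 2 ln P - 2 ln(b-a))`. -/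
theorem periodic_indicator_L1_bound
    (P C : ℝ) (hP : 0 < P) (hC : 0 < C)
    (K : ℝ → ℝ) (hKmeas : Measurable K)
    (hKper : Function.Periodic K (2 * P))
    (hKodd : ∀ x : ℝ, K (-x) = -K x)
    (hKb : ∀ x ∈ Set.Icc (-P) P, x ≠ 0 → |K x| ≤ C / |x|)
    (a b : ℝ) (hab : a ≤ b) (ha : -P ≤ a) (hb : b ≤ P) :
    ∃ Gg : ℝ → ℝ,
      (∀ᵐ x ∂volume, PVPerAt K (perIndicator P a b) P x (Gg x)) ∧
      IntegrableOn Gg (Set.Icc (-P) P) ∧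
      ∫ x in Set.Icc (-P) P, |Gg x| ≤
        C * (b - a) * (2 + 5 * Real.log 2 + 2 * Real.log P - 2 * Real.log (b - a)) :=
  periodic_indicator_L1_bound_general P C hP hC K hKmeas hKodd hKb a b hab ha hb

end
end

section
/- Let p₁ ≥ 1 and C_f > 0, and let f : ℝ → ℝ be C¹ with f' nondecreasing and f'(a+s) − f'(a) ≥ C_f s^{p₁} for all a ∈ ℝ and s > 0. Define the entropy flux q(v) = ∫₀^v s f'(s) ds. Then for every ω ≥ 0: (ω²/2)·f'(ω) − q(ω) ≥ (ω²/8)·(f'(ω) − f'(ω/2)) ≥ (C_f/2^{3+p₁})·ω^{2+p₁}. If moreover |f'(s)| ≤ C_f(1+|s|)^{p₂} for all s ∈ ℝ with p₁ ≤ p₂ < p₁ + 2 and γ_p := p₂/(2+p₁), then also (ω²/2)·f'(ω) − q(ω) ≥ (C_f/2^{3+p₁})·( |f'(ω)|^{1/γ_p}/(C_f^{1/γ_p}·2^{1+p₁}) − 1 ) for every ω ≥ 0. -/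
/-!
Since `f'` is nondecreasing, `η(ω) f'(ω) - q(ω) = ∫₀^ω s (f'(ω) - f'(s)) ds` has a nonnegative
integrand; keeping only `s ≤ ω/2`, where `f'(ω) - f'(s) ≥ f'(ω) - f'(ω/2) ≥ C_f (ω/2)^{p₁}`, gives
the power lower bound. The growth bound on `|f'|` converts it into a bound in terms of `f'(ω)`
through `(1 + ω)^r ≤ 2^{r-1} (1 + ω^r)`.
-/

open MeasureTheory intervalIntegral

lemma Real.rpow_add_le_mul_rpow_add_rpow {a b p : ℝ} (ha : 0 ≤ a) (hb : 0 ≤ b) (hp : 1 ≤ p) :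
    (a + b) ^ p ≤ 2 ^ (p - 1) * (a ^ p + b ^ p) := by
  lift a to NNReal using ha
  lift b to NNReal using hb
  exact_mod_cast NNReal.rpow_add_le_mul_rpow_add_rpow a b hp

/-- `η(ω) f'(ω) - q(ω)`, written in terms of `g = f'`. -/
noncomputable def entropyDissipation (g : ℝ → ℝ) (ω : ℝ) : ℝ :=
  (ω ^ 2 / 2) * g ω - (∫ s in (0:ℝ)..ω, s * g s)

lemma entropyDissipation_eq_integral {g : ℝ → ℝ} (hg : Monotone g) (ω : ℝ) :
    entropyDissipation g ω = ∫ s in (0:ℝ)..ω, s * (g ω - g s) := by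
  have hid : IntervalIntegrable (fun s : ℝ => s * g s) volume 0 ω :=
    hg.intervalIntegrable.continuousOn_mul continuousOn_id
  simp only [entropyDissipation, mul_sub]
  rw [integral_sub (intervalIntegrable_id.mul_const _) hid, intervalIntegral.integral_mul_const,
    integral_id]
  ring

lemma Monotone.sq_mul_sub_le_entropyDissipation {g : ℝ → ℝ} (hg : Monotone g) {t ω : ℝ}
    (ht : 0 ≤ t) (htω : t ≤ ω) : (t ^ 2 / 2) * (g ω - g t) ≤ entropyDissipation g ω := by
  have hint : ∀ a b : ℝ, IntervalIntegrable (fun s => s * (g ω - g s)) volume a b := fun a b =>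
    (intervalIntegrable_const.sub hg.intervalIntegrable).continuousOn_mul continuousOn_id
  have htail : 0 ≤ ∫ s in t..ω, s * (g ω - g s) :=
    integral_nonneg htω fun s hs =>
      mul_nonneg (ht.trans hs.1) (sub_nonneg.2 (hg hs.2))
  have hhead : ∫ s in (0:ℝ)..t, s * (g ω - g t) ≤ ∫ s in (0:ℝ)..t, s * (g ω - g s) :=
    integral_mono_on ht (intervalIntegrable_id.mul_const _) (hint 0 t) fun s hs =>
      mul_le_mul_of_nonneg_left (sub_le_sub_left (hg hs.2) _) hs.1
  rw [intervalIntegral.integral_mul_const, integral_id] at hhead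
  rw [entropyDissipation_eq_integral hg, ← integral_add_adjacent_intervals (hint 0 t) (hint t ω)]
  linarith

lemma rpow_le_sq_mul_sub_of_forall_rpow_le_sub {g : ℝ → ℝ} {C p ω : ℝ} (hp : 2 + p ≠ 0)
    (hgrowth : ∀ a s : ℝ, 0 < s → C * s ^ p ≤ g (a + s) - g a) (hω : 0 ≤ ω) :
    (C / 2 ^ (3 + p)) * ω ^ (2 + p) ≤ (ω ^ 2 / 8) * (g ω - g (ω / 2)) := by
  rcases hω.eq_or_lt with rfl | hω
  · simp [Real.zero_rpow hp]
  have hhalf := hgrowth (ω / 2) (ω / 2) (half_pos hω)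
  rw [add_halves] at hhalf
  calc (C / 2 ^ (3 + p)) * ω ^ (2 + p) = (ω ^ 2 / 8) * (C * (ω / 2) ^ p) := by
        rw [Real.div_rpow hω.le zero_le_two, Real.rpow_add hω, Real.rpow_add two_pos,
          Real.rpow_two]
        norm_num
        ring
    _ ≤ (ω ^ 2 / 8) * (g ω - g (ω / 2)) := by gcongr

lemma rpow_div_sub_one_le_rpow_of_abs_le {y C q r ω : ℝ} (hC : 0 < C) (hq : 0 < q)
    (hr : 1 ≤ r) (hω : 0 ≤ ω) (hy : |y| ≤ C * (1 + ω) ^ q) :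
    |y| ^ (r / q) / (C ^ (r / q) * 2 ^ (r - 1)) - 1 ≤ ω ^ r := by
  have hrq : 0 < r / q := div_pos (by linarith) hq
  have hpow : |y| ^ (r / q) ≤ C ^ (r / q) * (1 + ω) ^ r :=
    calc |y| ^ (r / q) ≤ (C * (1 + ω) ^ q) ^ (r / q) := by gcongr
      _ = C ^ (r / q) * (1 + ω) ^ r := by
        rw [Real.mul_rpow hC.le (by positivity), ← Real.rpow_mul (by linarith),
          mul_div_cancel₀ r hq.ne']
  have hconv : (1 + ω) ^ r ≤ 2 ^ (r - 1) * (1 + ω ^ r) := by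
    simpa using Real.rpow_add_le_mul_rpow_add_rpow zero_le_one hω hr
  have hCpos : 0 < C ^ (r / q) * 2 ^ (r - 1) := by positivity
  rw [sub_le_iff_le_add', div_le_iff₀ hCpos]
  calc |y| ^ (r / q) ≤ C ^ (r / q) * (2 ^ (r - 1) * (1 + ω ^ r)) :=
        hpow.trans (by gcongr)
    _ = (1 + ω ^ r) * (C ^ (r / q) * 2 ^ (r - 1)) := by ring

theorem entropy_flux_lower_bounds_general
    (p₁ C_f : ℝ) (f : ℝ → ℝ)
    (hp₁ : 1 ≤ p₁) (hCf : 0 < C_f)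
    (hmono : Monotone (deriv f))
    (hincr : ∀ a s : ℝ, 0 < s → C_f * s ^ p₁ ≤ deriv f (a + s) - deriv f a) :
    (∀ ω : ℝ, 0 ≤ ω →
      (ω ^ 2 / 8) * (deriv f ω - deriv f (ω / 2)) ≤
          (ω ^ 2 / 2) * deriv f ω - (∫ s in (0:ℝ)..ω, s * deriv f s) ∧
      (C_f / 2 ^ (3 + p₁)) * ω ^ (2 + p₁) ≤
          (ω ^ 2 / 8) * (deriv f ω - deriv f (ω / 2))) ∧
    (∀ p₂ : ℝ, p₁ ≤ p₂ → p₂ < p₁ + 2 →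
      (∀ s : ℝ, |deriv f s| ≤ C_f * (1 + |s|) ^ p₂) →
      ∀ ω : ℝ, 0 ≤ ω →
        (C_f / 2 ^ (3 + p₁)) *
            (|deriv f ω| ^ (1 / (p₂ / (2 + p₁))) /
              (C_f ^ (1 / (p₂ / (2 + p₁))) * 2 ^ (1 + p₁)) - 1) ≤
          (ω ^ 2 / 2) * deriv f ω - (∫ s in (0:ℝ)..ω, s * deriv f s)) := by
  have hfirst : ∀ ω : ℝ, 0 ≤ ω →
      (ω ^ 2 / 8) * (deriv f ω - deriv f (ω / 2)) ≤ entropyDissipation (deriv f) ω := by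
    intro ω hω
    convert hmono.sq_mul_sub_le_entropyDissipation (by linarith) (half_le_self hω) using 1
    ring
  have hsecond : ∀ ω : ℝ, 0 ≤ ω → (C_f / 2 ^ (3 + p₁)) * ω ^ (2 + p₁) ≤
      (ω ^ 2 / 8) * (deriv f ω - deriv f (ω / 2)) :=
    fun ω => rpow_le_sq_mul_sub_of_forall_rpow_le_sub (by linarith) hincr
  refine ⟨fun ω hω => ⟨hfirst ω hω, hsecond ω hω⟩, fun p₂ hp₁₂ _ hbound ω hω => ?_⟩
  have hpoly := rpow_div_sub_one_le_rpow_of_abs_le hCf (by linarith) (by linarith : 1 ≤ 2 + p₁)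
    hω (abs_of_nonneg hω ▸ hbound ω)
  rw [one_div_div, show (1 : ℝ) + p₁ = 2 + p₁ - 1 by ring]
  calc _ ≤ (C_f / 2 ^ (3 + p₁)) * ω ^ (2 + p₁) := by gcongr
    _ ≤ _ := (hsecond ω hω).trans (hfirst ω hω)

/-- **Entropy dissipation lower bounds** (estimates in Step 1 of Lemma 2.4).
Let `f` be `C¹` with nondecreasing derivative and `f'(a+s) - f'(a) ≥ C_f s^{p₁}` for all
`a ∈ ℝ`, `s > 0`, and let `q(v) = ∫₀^v s f'(s) ds` be the entropy flux associated to the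
quadratic entropy `η(v) = v²/2`. Then for every `ω ≥ 0`,
`η(ω) f'(ω) - q(ω) ≥ (ω²/8)(f'(ω) - f'(ω/2)) ≥ (C_f/2^{3+p₁}) ω^{2+p₁}`; and if moreover
`|f'(s)| ≤ C_f (1+|s|)^{p₂}` with `p₁ ≤ p₂ < p₁ + 2` and `γ_p = p₂/(2+p₁)`, then also
`η(ω) f'(ω) - q(ω) ≥ (C_f/2^{3+p₁}) (|f'(ω)|^{1/γ_p} / (C_f^{1/γ_p} 2^{1+p₁}) - 1)`. -/
theorem entropy_flux_lower_bounds
    (p₁ C_f : ℝ) (f : ℝ → ℝ)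
    (hp₁ : 1 ≤ p₁) (hCf : 0 < C_f)
    (hf : ContDiff ℝ 1 f) (hmono : Monotone (deriv f))
    (hincr : ∀ a s : ℝ, 0 < s → C_f * s ^ p₁ ≤ deriv f (a + s) - deriv f a) :
    (∀ ω : ℝ, 0 ≤ ω →
      (ω ^ 2 / 8) * (deriv f ω - deriv f (ω / 2)) ≤
          (ω ^ 2 / 2) * deriv f ω - (∫ s in (0:ℝ)..ω, s * deriv f s) ∧
      (C_f / 2 ^ (3 + p₁)) * ω ^ (2 + p₁) ≤
          (ω ^ 2 / 8) * (deriv f ω - deriv f (ω / 2))) ∧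
    (∀ p₂ : ℝ, p₁ ≤ p₂ → p₂ < p₁ + 2 →
      (∀ s : ℝ, |deriv f s| ≤ C_f * (1 + |s|) ^ p₂) →
      ∀ ω : ℝ, 0 ≤ ω →
        (C_f / 2 ^ (3 + p₁)) *
            (|deriv f ω| ^ (1 / (p₂ / (2 + p₁))) /
              (C_f ^ (1 / (p₂ / (2 + p₁))) * 2 ^ (1 + p₁)) - 1) ≤
          (ω ^ 2 / 2) * deriv f ω - (∫ s in (0:ℝ)..ω, s * deriv f s)) :=
  entropy_flux_lower_bounds_general p₁ C_f f hp₁ hCf hmono hincr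
end
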